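/- arXiv:2401.00666 — 3 statements merged into one kernel-verified Lean document; each statement's English description precedes it below -/
import Mathlib

section
/- For finite graphs G and H, every edge of the Cartesian product of δ-complements G_δ □ H_δ is also an edge of the δ-complement of the Cartesian product (G □ H)_δ. -/
open scoped Classical
open SimpleGraph

/-- The δ-complement of a graph: `u v` are adjacent iff they are distinct and
either they have equal degrees and are non-adjacent in `G`, or they have
different degrees and are adjacent in `G`. -/
def deltaComp {V : Type*} [Fintype V] (G : SimpleGraph V) : SimpleGraph V where
  Adj u v := u ≠ v ∧ ((G.degree u = G.degree v ∧ ¬ G.Adj u v) ∨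
    (G.degree u ≠ G.degree v ∧ G.Adj u v))
  symm := by
    constructor
    intro u v h
    refine ⟨h.1.symm, ?_⟩
    rcases h.2 with ⟨hd, ha⟩ | ⟨hd, ha⟩
    · exact Or.inl ⟨hd.symm, fun hh => ha hh.symm⟩
    · exact Or.inr ⟨fun hh => hd hh.symm, ha.symm⟩
  loopless := ⟨fun v h => h.1 rfl⟩

/-- The δ-chromatic number: chromatic number of the δ-complement. -/
noncomputable def deltaChrom {V : Type*} [Fintype V] (G : SimpleGraph V) : ℕ∞ :=
  (deltaComp G).chromaticNumber

/-!
Along an edge of `G_δ □ H_δ` one coordinate is fixed, say the second one `b`. In `G □ H` the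
degree of `(a, b)` is `deg_G a + deg_H b`, so two vertices of the fibre over `b` have equal
degrees in `G □ H` exactly when their first coordinates have equal degrees in `G`, and they are
adjacent in `G □ H` exactly when those coordinates are adjacent in `G`. Hence `(G □ H)_δ`
restricted to a fibre is a copy of `G_δ` (resp. `H_δ`), which contains the edge.
-/

namespace SimpleGraph

variable {V W : Type*} [Fintype V] [Fintype W] (G : SimpleGraph V) (H : SimpleGraph W)

theorem deltaComp_adj {u v : V} :
    (deltaComp G).Adj u v ↔ u ≠ v ∧ ((G.degree u = G.degree v ∧ ¬ G.Adj u v) ∨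
      (G.degree u ≠ G.degree v ∧ G.Adj u v)) :=
  Iff.rfl

theorem deltaComp_boxProd_adj_left {a a' : V} {b : W} :
    (deltaComp (G □ H)).Adj (a, b) (a', b) ↔ (deltaComp G).Adj a a' := by
  simp only [deltaComp_adj, degree_boxProd, Nat.add_right_cancel_iff, boxProd_adj_left, ne_eq,
    Prod.mk.injEq, and_true]

theorem deltaComp_boxProd_adj_right {a : V} {b b' : W} :
    (deltaComp (G □ H)).Adj (a, b) (a, b') ↔ (deltaComp H).Adj b b' := by
  simp only [deltaComp_adj, degree_boxProd, Nat.add_left_cancel_iff, boxProd_adj_right, ne_eq,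
    Prod.mk.injEq, true_and]

end SimpleGraph

/-- Every edge of `G_δ □ H_δ` is an edge of `(G □ H)_δ`. -/
theorem boxProd_deltaComp_le {V W : Type*} [Fintype V] [Fintype W]
    (G : SimpleGraph V) (H : SimpleGraph W) (u v : V × W)
    (h : (deltaComp G □ deltaComp H).Adj u v) :
    (deltaComp (G □ H)).Adj u v := by
  obtain ⟨a, b⟩ := u
  obtain ⟨a', b'⟩ := v
  rcases h with ⟨hG, rfl : b = b'⟩ | ⟨hH, rfl : a = a'⟩
  · exact (deltaComp_boxProd_adj_left G H).2 hG
  · exact (deltaComp_boxProd_adj_right G H).2 hH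
end

section
/- For m ≥ 3, the δ-chromatic number of S_{1,m} □ P₃ equals 2m. -/
open scoped Classical
open SimpleGraph

/-- The star `S_{1,m}` with one center and `m` leaves. -/
def starGraph (m : ℕ) : SimpleGraph (Fin 1 ⊕ Fin m) := completeBipartiteGraph (Fin 1) (Fin m)

/-!
All vertices `(leaf, end of the path)` of `S_{1,m} □ P₃` have degree `2` and are pairwise
non-adjacent, so these `2m` vertices form a clique of the δ-complement.
Conversely, every edge of the δ-complement joins two vertices of equal degree or is an edge of the
original graph, so a proper colouring of the graph that is injective on each degree class is a
colouring of the δ-complement. For `m ≥ 3` the degree classes are the leaves at the ends of the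
path (degree `2`), the leaves in the middle (`3`) and the centre vertices (`m + 1`, `m + 2`), and
`2m` colours `Bool × Fin m` suffice: the leaves at the ends take all colours, the middle leaves
are shifted cyclically, and each centre vertex gets the `Bool` value opposite to that of the leaves
in its layer.
-/

open Finset

section DeltaComp

variable {V : Type*} [Fintype V] {G : SimpleGraph V}

theorem isClique_deltaComp_of_isIndepSet {s : Set V} (hs : G.IsIndepSet s)
    (hdeg : ∀ u ∈ s, ∀ v ∈ s, G.degree u = G.degree v) : (deltaComp G).IsClique s :=
  fun _ hu _ hv huv ↦ ⟨huv, Or.inl ⟨hdeg _ hu _ hv, hs hu hv huv⟩⟩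

theorem colorable_deltaComp {α : Type*} [Fintype α] (c : V → α)
    (hc : ∀ ⦃u v⦄, G.Adj u v → c u ≠ c v) (hinj : Function.Injective fun v ↦ (c v, G.degree v)) :
    (deltaComp G).Colorable (Fintype.card α) :=
  Coloring.colorable <| Coloring.mk c fun {_ _} ⟨huv, h⟩ ↦ by
    rcases h with ⟨hdeg, -⟩ | ⟨-, hadj⟩
    · exact fun hcol ↦ huv (hinj (Prod.ext hcol hdeg))
    · exact hc hadj

end DeltaComp

theorem completeBipartiteGraph_degree_inl {W₁ W₂ : Type*} [Fintype W₂] (a : W₁)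
    [Fintype ((completeBipartiteGraph W₁ W₂).neighborSet (.inl a))] :
    (completeBipartiteGraph W₁ W₂).degree (.inl a) = Fintype.card W₂ := by
  have : (completeBipartiteGraph W₁ W₂).neighborFinset (.inl a) = univ.map .inr := by
    ext (_ | _) <;> simp
  rw [← card_neighborFinset_eq_degree, this, card_map, card_univ]

theorem completeBipartiteGraph_degree_inr {W₁ W₂ : Type*} [Fintype W₁] (b : W₂)
    [Fintype ((completeBipartiteGraph W₁ W₂).neighborSet (.inr b))] :
    (completeBipartiteGraph W₁ W₂).degree (.inr b) = Fintype.card W₁ := by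
  have : (completeBipartiteGraph W₁ W₂).neighborFinset (.inr b) = univ.map .inl := by
    ext (_ | _) <;> simp
  rw [← card_neighborFinset_eq_degree, this, card_map, card_univ]

theorem pathGraph_three_degree (j : Fin 3) [Fintype ((pathGraph 3).neighborSet j)] :
    (pathGraph 3).degree j = if j = 1 then 2 else 1 := by
  rw [← card_neighborFinset_eq_degree]
  obtain rfl | rfl | rfl : j = 0 ∨ j = 1 ∨ j = 2 := by fin_cases j <;> simp
  · rw [show (pathGraph 3).neighborFinset 0 = {1} by ext k; fin_cases k <;> simp [pathGraph_adj]]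
    rfl
  · rw [show (pathGraph 3).neighborFinset 1 = {0, 2} by ext k; fin_cases k <;> simp [pathGraph_adj]]
    rfl
  · rw [show (pathGraph 3).neighborFinset 2 = {1} by ext k; fin_cases k <;> simp [pathGraph_adj]]
    rfl

section StarPath

variable (m : ℕ)

theorem starGraph_boxProd_path_degree (x : Fin 1 ⊕ Fin m) (j : Fin 3)
    [Fintype ((_root_.starGraph m □ pathGraph 3).neighborSet (x, j))] :
    (_root_.starGraph m □ pathGraph 3).degree (x, j) =
      x.elim (fun _ ↦ m) (fun _ ↦ 1) + if j = 1 then 2 else 1 := by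
  rw [degree_boxProd, pathGraph_three_degree]
  congr 1
  rcases x with a | i
  · exact (completeBipartiteGraph_degree_inl a).trans (Fintype.card_fin m)
  · exact (completeBipartiteGraph_degree_inr i).trans (Fintype.card_fin 1)

def leafEnds : Finset ((Fin 1 ⊕ Fin m) × Fin 3) := univ.map .inr ×ˢ {0, 2}

theorem card_leafEnds : #(leafEnds m) = 2 * m := by
  simp [leafEnds, mul_comm]

theorem mem_leafEnds {x : Fin 1 ⊕ Fin m} {j : Fin 3} :
    (x, j) ∈ leafEnds m ↔ (∃ i, .inr i = x) ∧ (j = 0 ∨ j = 2) := by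
  simp [leafEnds]

theorem isIndepSet_leafEnds : (_root_.starGraph m □ pathGraph 3).IsIndepSet (leafEnds m) := by
  rintro ⟨x, j⟩ hu ⟨y, k⟩ hv -
  obtain ⟨⟨i, rfl⟩, rfl | rfl⟩ := (mem_leafEnds m).1 hu <;>
    obtain ⟨⟨i', rfl⟩, rfl | rfl⟩ := (mem_leafEnds m).1 hv <;>
    simp [_root_.starGraph, pathGraph_adj]

theorem degree_eq_of_mem_leafEnds {x : Fin 1 ⊕ Fin m} {j : Fin 3} (hv : (x, j) ∈ leafEnds m)
    [Fintype ((_root_.starGraph m □ pathGraph 3).neighborSet (x, j))] :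
    (_root_.starGraph m □ pathGraph 3).degree (x, j) = 2 := by
  obtain ⟨⟨i, rfl⟩, rfl | rfl⟩ := (mem_leafEnds m).1 hv <;> simp [starGraph_boxProd_path_degree]

def starPathColoring [NeZero m] : (Fin 1 ⊕ Fin m) × Fin 3 → Bool × Fin m
  | (.inr i, 0) => (false, i)
  | (.inr i, 1) => (false, i + 1)
  | (.inr i, 2) => (true, i)
  | (.inl _, 0) => (true, 0)
  | (.inl _, 1) => (true, 1)
  | (.inl _, 2) => (false, 0)

theorem starPathColoring_ne_of_adj [NeZero m] (hm : 2 ≤ m) ⦃u v : (Fin 1 ⊕ Fin m) × Fin 3⦄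
    (h : (_root_.starGraph m □ pathGraph 3).Adj u v) :
    starPathColoring m u ≠ starPathColoring m v := by
  obtain ⟨x, j⟩ := u
  obtain ⟨y, k⟩ := v
  rcases h with ⟨hxy, rfl : j = k⟩ | ⟨hjk, rfl : x = y⟩
  · rcases x with _ | _ <;> rcases y with _ | _ <;> fin_cases j <;>
      simp_all [_root_.starGraph, starPathColoring]
  · have hm₁ : m ≠ 1 := by omega
    rcases x with _ | _ <;> fin_cases j <;> fin_cases k <;>
      simp_all [pathGraph_adj, starPathColoring, eq_comm]

def starPathDecode [NeZero m] : (Bool × Fin m) × ℕ → (Fin 1 ⊕ Fin m) × Fin 3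
  | ((b, i), d) =>
    if d = 2 then (.inr i, if b then 2 else 0)
    else if d = 3 then (.inr (i - 1), 1)
    else if d = m + 2 then (.inl 0, 1)
    else (.inl 0, if b then 0 else 2)

theorem leftInverse_starPathDecode [NeZero m] (hm : 3 ≤ m) :
    Function.LeftInverse (starPathDecode m)
      fun v ↦ (starPathColoring m v, (_root_.starGraph m □ pathGraph 3).degree v) := by
  have hm' : m ≠ 0 ∧ m ≠ 1 ∧ m ≠ 2 := by omega
  rintro ⟨x | i, j⟩ <;> fin_cases j <;>
    simp [starGraph_boxProd_path_degree, starPathColoring, starPathDecode, Fin.fin_one_eq_zero, hm']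

end StarPath

/-- For `m ≥ 3`, `χ_δ(S_{1,m} □ P₃) = 2m`. -/
theorem deltaChrom_star_boxProd_path_three (m : ℕ) (hm : 3 ≤ m) :
    deltaChrom (_root_.starGraph m □ pathGraph 3) = ((2 * m : ℕ) : ℕ∞) := by
  have : NeZero m := ⟨by omega⟩
  -- `convert` identifies the classical `Fintype` instances on neighbour sets used by `deltaComp`
  -- with those synthesized for the box product.
  refine le_antisymm ?_ ?_
  · have h := colorable_deltaComp (starPathColoring m) (starPathColoring_ne_of_adj m (by omega))
      (by convert (leftInverse_starPathDecode m hm).injective)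
    rw [Fintype.card_prod, Fintype.card_bool, Fintype.card_fin] at h
    exact h.chromaticNumber_le
  · have h := (isClique_deltaComp_of_isIndepSet (isIndepSet_leafEnds m)
      fun u hu v hv ↦ by
        convert (degree_eq_of_mem_leafEnds m hu).trans (degree_eq_of_mem_leafEnds m hv).symm)
    rw [← card_leafEnds m]
    exact h.card_le_chromaticNumber
end

section
/- In the grid P_n □ P_k with n, k ≥ 4, the set V₄ of interior vertices (those of degree 4), which has size (n-2)(k-2), induces in (P_n □ P_k)_δ a graph in which two interior vertices (i,j), (i',j') are adjacent iff |i-i'| + |j-j'| ≥ 2; consequently χ_δ(P_n □ P_k) ≥ ⌈(n-2)(k-2)/2⌉. -/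
open scoped Classical
open SimpleGraph

/-!
Every interior vertex of the grid has degree 4, so on the interior the δ-complement is just the
complement of the grid: distinct interior vertices are δ-adjacent iff they are not grid neighbours,
i.e. iff their L¹-distance is at least 2. Hence an independent set of the δ-complement inside the
interior is a clique of the grid; the grid is bipartite, so such a clique has at most two vertices.
Every colour class therefore meets the interior in at most two vertices, and
`χ_δ ≥ ⌈(n-2)(k-2)/2⌉`.
-/

open Finset

theorem Fin.card_filter_pos_and_succ_lt (n : ℕ) :
    #{i : Fin n | 0 < i.val ∧ i.val + 1 < n} = n - 2 := by
  have hmap : (univ.filter fun i : Fin n ↦ 0 < i.val ∧ i.val + 1 < n).map Fin.valEmbedding =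
      Ioo 0 (n - 1) := by
    ext m
    simp only [mem_map, mem_filter, mem_univ, true_and, Fin.valEmbedding_apply, mem_Ioo]
    exact ⟨fun ⟨i, hi, hm⟩ ↦ by omega, fun h ↦ ⟨⟨m, by omega⟩, by simp only; omega, rfl⟩⟩
  rw [← card_map, hmap, Nat.card_Ioo]
  omega

namespace SimpleGraph

variable {V : Type*}

theorem Coloring.card_le_mul_of_isIndepSet {α : Type*} [Fintype α] {G : SimpleGraph V}
    (C : G.Coloring α) {s : Finset V} {m : ℕ}
    (hs : ∀ t ⊆ s, G.IsIndepSet (t : Set V) → #t ≤ m) : #s ≤ m * Fintype.card α :=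
  card_le_mul_card_image_of_maps_to (t := univ) (fun _ _ ↦ mem_univ _) m fun _ _ ↦
    hs _ (filter_subset _ s) fun _ hu _ hv _ ↦ by
      simp only [coe_filter] at hu hv
      exact C.not_adj_of_mem_colorClass hu.2 hv.2

theorem div_le_chromaticNumber_of_isIndepSet {G : SimpleGraph V} {s : Finset V} {m : ℕ}
    (hs : ∀ t ⊆ s, G.IsIndepSet (t : Set V) → #t ≤ m) :
    (((#s + m - 1) / m : ℕ) : ℕ∞) ≤ G.chromaticNumber := by
  refine le_chromaticNumber_iff_coloring.2 fun c C ↦ ?_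
  have hsc := C.card_le_mul_of_isIndepSet hs
  rw [Fintype.card_fin] at hsc
  rcases Nat.eq_zero_or_pos m with rfl | hm
  · simp
  · refine Nat.cast_le.2 (Nat.lt_succ_iff.1 ((Nat.div_lt_iff_lt_mul hm).2 ?_))
    rw [Nat.succ_mul, mul_comm]
    omega

theorem deltaComp_adj_of_degree_eq [Fintype V] {G : SimpleGraph V}
    [∀ v, Fintype (G.neighborSet v)] {u v : V} (h : G.degree u = G.degree v) :
    (deltaComp G).Adj u v ↔ u ≠ v ∧ ¬G.Adj u v := by
  have hadj : (deltaComp G).Adj u v ↔ u ≠ v ∧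
      (G.degree u = G.degree v ∧ ¬G.Adj u v ∨ G.degree u ≠ G.degree v ∧ G.Adj u v) := by
    unfold deltaComp
    -- `deltaComp` computes degrees with its own classical `Fintype` instances
    convert Iff.rfl
  simp [hadj, h]

theorem isClique_of_isIndepSet_deltaComp [Fintype V] {G : SimpleGraph V}
    [∀ v, Fintype (G.neighborSet v)] {t : Set V} {d : ℕ} (hd : ∀ v ∈ t, G.degree v = d)
    (ht : (deltaComp G).IsIndepSet t) : G.IsClique t := fun u hu v hv huv ↦ by
  simpa [deltaComp_adj_of_degree_eq ((hd u hu).trans (hd v hv).symm), huv] using ht hu hv huv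

def Coloring.boxProdXor {α β : Type*} {G : SimpleGraph α} {H : SimpleGraph β}
    (c : G.Coloring Bool) (d : H.Coloring Bool) : (G □ H).Coloring Bool :=
  Coloring.mk (fun x ↦ xor (c x.1) (d x.2)) fun {x y} h ↦ by
    rcases boxProd_adj.1 h with ⟨h₁, h₂⟩ | ⟨h₂, h₁⟩
    · simpa [h₂] using c.valid h₁
    · simpa [h₁] using d.valid h₂

variable {n k : ℕ}

theorem pathGraph_degree (i : Fin n) :
    (pathGraph n).degree i = (if 0 < i.val then 1 else 0) + (if i.val + 1 < n then 1 else 0) := by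
  have hsplit : (pathGraph n).neighborFinset i = univ.filter (fun j : Fin n ↦ j.val + 1 = i.val) ∪
      univ.filter (fun j ↦ i.val + 1 = j.val) := by
    ext j
    simp [pathGraph_adj, or_comm]
  rw [← card_neighborFinset_eq_degree, hsplit, card_union_of_disjoint]
  · congr 1
    · split_ifs with h
      · exact card_eq_one.2 ⟨⟨i.val - 1, by omega⟩, by ext j; simp [Fin.ext_iff]; omega⟩
      · exact card_eq_zero.2 (by ext j; simp; omega)
    · split_ifs with h
      · exact card_eq_one.2 ⟨⟨i.val + 1, h⟩, by ext j; simp [Fin.ext_iff]; omega⟩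
      · exact card_eq_zero.2 (by ext j; simp; omega)
  · exact disjoint_filter.2 fun j _ h₁ h₂ ↦ by omega

theorem pathGraph_boxProd_degree_eq_four_iff (p : Fin n × Fin k) :
    (pathGraph n □ pathGraph k).degree p = 4 ↔
      (0 < p.1.val ∧ p.1.val + 1 < n) ∧ (0 < p.2.val ∧ p.2.val + 1 < k) := by
  rw [degree_boxProd, pathGraph_degree, pathGraph_degree]
  split_ifs <;> omega

theorem card_pathGraph_boxProd_degree_eq_four :
    #{p : Fin n × Fin k | (pathGraph n □ pathGraph k).degree p = 4} = (n - 2) * (k - 2) := by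
  rw [← Fin.card_filter_pos_and_succ_lt n, ← Fin.card_filter_pos_and_succ_lt k, ← card_product]
  congr 1
  ext p
  simp [pathGraph_boxProd_degree_eq_four_iff]

theorem pathGraph_boxProd_colorable_two : (pathGraph n □ pathGraph k).Colorable 2 :=
  ((pathGraph.bicoloring n).boxProdXor (pathGraph.bicoloring k)).colorable

theorem deltaComp_pathGraph_boxProd_adj_iff {p q : Fin n × Fin k}
    (hp : (pathGraph n □ pathGraph k).degree p = 4)
    (hq : (pathGraph n □ pathGraph k).degree q = 4) :
    (deltaComp (pathGraph n □ pathGraph k)).Adj p q ↔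
      2 ≤ |(p.1.val : ℤ) - q.1.val| + |(p.2.val : ℤ) - q.2.val| := by
  rw [deltaComp_adj_of_degree_eq (hp.trans hq.symm), boxProd_adj]
  simp only [ne_eq, Prod.ext_iff, Fin.ext_iff, pathGraph_adj, not_or, not_and]
  grind

end SimpleGraph

theorem deltaComp_grid_interior_general (n k : ℕ) :
    ({p : Fin n × Fin k | (pathGraph n □ pathGraph k).degree p = 4}).ncard
        = (n - 2) * (k - 2) ∧
      (∀ p q : Fin n × Fin k,
        (pathGraph n □ pathGraph k).degree p = 4 →
        (pathGraph n □ pathGraph k).degree q = 4 →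
        ((deltaComp (pathGraph n □ pathGraph k)).Adj p q ↔
          2 ≤ |(p.1.val : ℤ) - q.1.val| + |(p.2.val : ℤ) - q.2.val|)) ∧
      ((((n - 2) * (k - 2) + 1) / 2 : ℕ) : ℕ∞) ≤
        deltaChrom (pathGraph n □ pathGraph k) := by
  have hcard := card_pathGraph_boxProd_degree_eq_four (n := n) (k := k)
  refine ⟨by rw [Set.ncard_eq_toFinset_card', Set.toFinset_ofPred, hcard],
    fun p q hp hq ↦ deltaComp_pathGraph_boxProd_adj_iff hp hq, ?_⟩
  have hindep : ∀ t ⊆ ({p | (pathGraph n □ pathGraph k).degree p = 4} : Finset _),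
      (deltaComp (pathGraph n □ pathGraph k)).IsIndepSet (t : Set _) → #t ≤ 2 :=
    fun t hts ht ↦ (isClique_of_isIndepSet_deltaComp
      (fun p hp ↦ (mem_filter.1 (hts hp)).2) ht).card_le_of_colorable
      pathGraph_boxProd_colorable_two
  simpa [deltaChrom, hcard] using div_le_chromaticNumber_of_isIndepSet hindep

/-- In the grid `P_n □ P_k` with `n, k ≥ 4`, the set of interior (degree 4)
vertices has size `(n-2)(k-2)`, two interior vertices are adjacent in the
δ-complement iff their grid distance is at least `2`, and consequently
`χ_δ(P_n □ P_k) ≥ ⌈(n-2)(k-2)/2⌉`. -/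
theorem deltaComp_grid_interior (n k : ℕ) (hn : 4 ≤ n) (hk : 4 ≤ k) :
    ({p : Fin n × Fin k | (pathGraph n □ pathGraph k).degree p = 4}).ncard
        = (n - 2) * (k - 2) ∧
      (∀ p q : Fin n × Fin k,
        (pathGraph n □ pathGraph k).degree p = 4 →
        (pathGraph n □ pathGraph k).degree q = 4 →
        ((deltaComp (pathGraph n □ pathGraph k)).Adj p q ↔
          2 ≤ |(p.1.val : ℤ) - q.1.val| + |(p.2.val : ℤ) - q.2.val|)) ∧
      ((((n - 2) * (k - 2) + 1) / 2 : ℕ) : ℕ∞) ≤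
        deltaChrom (pathGraph n □ pathGraph k) :=
  deltaComp_grid_interior_general n k
end
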